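/- arXiv:1705.10240 — 3 statements merged into one kernel-verified Lean document; each statement's English description precedes it below -/
import Mathlib

section
/- Let Γ : ℝ → ℝ be symmetric, non-negative definite, with Γ(0) = 1, 0 ≤ Γ ≤ 1, and Γ(z) → 0 as |z| → ∞. Then for every δ > 0, sup_{|z| ≥ δ} Γ(z) < 1. -/
/-!
If `Γ` came arbitrarily close to `1` away from the origin, pick `w k ≥ δ` with
`2 (1 - Γ (w k)) ≤ 4⁻¹ ^ (k + 2)`. Non-negative definiteness gives
`|Γ x - Γ y| ≤ √(2 (1 - Γ (x - y)))`, so along the partial sums `s n = ∑_{k<n} w k` the value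
of `Γ` drops by at most `2⁻¹ ^ (k + 2)` per step and stays `≥ 1/2`, while `s n ≥ n δ → ∞`
forces `Γ (s n) → 0`.
-/

/-- A function `Γ : ℝ → ℝ` is non-negative definite if for every finite collection of
points `z i` and coefficients `c i`, `∑ i, ∑ j, c i * c j * Γ (z i - z j) ≥ 0`. -/
def NonNegDefinite (Γ : ℝ → ℝ) : Prop :=
  ∀ (n : ℕ) (z c : Fin n → ℝ), 0 ≤ ∑ i, ∑ j, c i * c j * Γ (z i - z j)

open Filter Finset

theorem exists_le_and_lt_of_le_sSup_image_abs_ge {f : ℝ → ℝ} (hf : ∀ z, f (-z) = f z)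
    {δ a b : ℝ} (hδ : 0 ≤ δ) (ha : a ≤ sSup (f '' {z | δ ≤ |z|})) (hb : b < a) :
    ∃ w, δ ≤ w ∧ b < f w := by
  have hne : (f '' {z | δ ≤ |z|}).Nonempty := ⟨f δ, δ, by simp [abs_of_nonneg hδ], rfl⟩
  obtain ⟨_, ⟨z, hz, rfl⟩, hlt⟩ := exists_lt_of_lt_csSup hne (hb.trans_le ha)
  refine ⟨|z|, hz, ?_⟩
  rcases abs_choice z with h | h <;> rw [h]
  · exact hlt
  · rwa [hf]

namespace NonNegDefinite

variable {Γ : ℝ → ℝ}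

theorem sq_sub_le (hnd : NonNegDefinite Γ) (hsym : ∀ z, Γ (-z) = Γ z) (h0 : Γ 0 = 1)
    (x y : ℝ) : (Γ x - Γ y) ^ 2 ≤ 2 * (1 - Γ (x - y)) := by
  -- the quadratic form at the points `0, x, y` with coefficients `Γ y - Γ x, 1, -1`
  have h := hnd 3 ![0, x, y] ![Γ y - Γ x, 1, -1]
  have hyx : Γ (y - x) = Γ (x - y) := by rw [← neg_sub, hsym]
  simp only [Fin.sum_univ_three, Matrix.cons_val_zero, Matrix.cons_val_one,
    Matrix.cons_val_two, Matrix.head_cons, Matrix.tail_cons, sub_self, sub_zero, zero_sub,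
    hsym, hyx, h0] at h
  nlinarith [h]

theorem sub_le_apply_add (hnd : NonNegDefinite Γ) (hsym : ∀ z, Γ (-z) = Γ z) (h0 : Γ 0 = 1)
    {w ε : ℝ} (hε : 0 ≤ ε) (hw : 2 * (1 - Γ w) ≤ ε ^ 2) (x : ℝ) :
    Γ x - ε ≤ Γ (x + w) := by
  have h := hnd.sq_sub_le hsym h0 (x + w) x
  rw [add_sub_cancel_left] at h
  linarith [(abs_le_of_sq_le_sq' (h.trans hw) hε).1]

theorem one_sub_sum_le_apply_sum (hnd : NonNegDefinite Γ) (hsym : ∀ z, Γ (-z) = Γ z)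
    (h0 : Γ 0 = 1) {w ε : ℕ → ℝ} (hε : ∀ k, 0 ≤ ε k) (hw : ∀ k, 2 * (1 - Γ (w k)) ≤ ε k ^ 2)
    (n : ℕ) : 1 - ∑ k ∈ range n, ε k ≤ Γ (∑ k ∈ range n, w k) := by
  induction n with
  | zero => simp [h0]
  | succ n ih =>
    rw [sum_range_succ, sum_range_succ]
    linarith [hnd.sub_le_apply_add hsym h0 (hε n) (hw n) (∑ k ∈ range n, w k)]

theorem exists_tendsto_atTop_half_le (hnd : NonNegDefinite Γ) (hsym : ∀ z, Γ (-z) = Γ z)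
    (h0 : Γ 0 = 1) {δ : ℝ} (hδ : 0 < δ) (hnear : ∀ ε > 0, ∃ w, δ ≤ w ∧ 1 - ε < Γ w) :
    ∃ s : ℕ → ℝ, Tendsto s atTop atTop ∧ ∀ n, 1 / 2 ≤ Γ (s n) := by
  choose w hδw hw using fun k : ℕ => hnear (((1 / 2 : ℝ) ^ (k + 2)) ^ 2 / 2) (by positivity)
  refine ⟨fun n => ∑ k ∈ range n, w k, ?_, fun n => ?_⟩
  · refine tendsto_atTop_mono (fun n => ?_) (tendsto_natCast_atTop_atTop.atTop_mul_const hδ)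
    simpa [nsmul_eq_mul] using card_nsmul_le_sum (range n) w δ fun k _ => hδw k
  · have hgeom : ∑ k ∈ range n, (1 / 2 : ℝ) ^ (k + 2) ≤ 1 / 2 := by
      simp only [pow_add, ← sum_mul]
      nlinarith [sum_geometric_two_le n]
    linarith [hnd.one_sub_sum_le_apply_sum hsym h0 (w := w) (ε := fun k => (1 / 2 : ℝ) ^ (k + 2))
      (fun k => by positivity) (fun k => by linarith [hw k]) n]

end NonNegDefinite

theorem stmt_1_general (Γ : ℝ → ℝ) (hsym : ∀ z : ℝ, Γ (-z) = Γ z)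
    (hnd : NonNegDefinite Γ) (h0 : Γ 0 = 1)
    (hdecay : Filter.Tendsto Γ (Filter.cocompact ℝ) (nhds 0)) :
    ∀ δ : ℝ, 0 < δ → sSup (Γ '' {z : ℝ | δ ≤ |z|}) < 1 := by
  intro δ hδ
  by_contra! hsup
  obtain ⟨s, hs, hhalf⟩ := hnd.exists_tendsto_atTop_half_le hsym h0 hδ fun ε hε =>
    exists_le_and_lt_of_le_sSup_image_abs_ge hsym hδ.le hsup (by linarith)
  obtain ⟨n, hn⟩ :=
    ((hdecay.comp (hs.mono_right atTop_le_cocompact)).eventually_lt_const one_half_pos).exists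
  exact (hhalf n).not_gt hn

theorem stmt_1 (Γ : ℝ → ℝ) (hsym : ∀ z : ℝ, Γ (-z) = Γ z)
    (hnd : NonNegDefinite Γ) (h0 : Γ 0 = 1)
    (hrange : ∀ z : ℝ, Γ z ∈ Set.Icc (0 : ℝ) 1)
    (hdecay : Filter.Tendsto Γ (Filter.cocompact ℝ) (nhds 0)) :
    ∀ δ : ℝ, 0 < δ → sSup (Γ '' {z : ℝ | δ ≤ |z|}) < 1 :=
  stmt_1_general Γ hsym hnd h0 hdecay
end

section
/- Let φ ∈ C_c^∞(ℝ, [0,∞)) be symmetric with ∫φ²=1, φ_ε(q)=ε^{-1/2}φ(q/ε), ν a finite Borel measure on ℝ with ν²(Δ₀)>0, and ψ_ε(z) = c_ε ∫ φ_ε(z−q) dν(q) with c_ε chosen so ∫ ψ_ε² = 1. Let ν₀ be the probability measure ν₀(A) = ∑_{a_k∈A}(ν({a_k}))² / ∑_k(ν({a_k}))², where {a_k} are the atoms of ν. Then for every f ∈ C_c^∞(ℝ), ∫ f(z) ψ_ε²(z) dz → ∫ f dν₀ as ε → 0+. -/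
open MeasureTheory

/-- The rescaled function `φ_ε(q) = ε^{-1/2} φ(q/ε)`. -/
noncomputable def phiEps (φ : ℝ → ℝ) (ε q : ℝ) : ℝ := (Real.sqrt ε)⁻¹ * φ (q / ε)

/-- The autocorrelation `Φ_ε(z) = ∫ φ_ε(z+q) φ_ε(q) dq`. -/
noncomputable def PhiEps (φ : ℝ → ℝ) (ε z : ℝ) : ℝ :=
  ∫ q : ℝ, phiEps φ ε (z + q) * phiEps φ ε q

/-- The normalizing constant `c_ε = [∫∫ Φ_ε(q₁-q₂) dν²]^{-1/2}`. -/
noncomputable def cEps (φ : ℝ → ℝ) (ν : Measure ℝ) (ε : ℝ) : ℝ :=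
  (Real.sqrt (∫ p : ℝ × ℝ, PhiEps φ ε (p.1 - p.2) ∂ν.prod ν))⁻¹

/-- The smoothed density `ψ_ε(z) = c_ε ∫ φ_ε(z-q) dν(q)`. -/
noncomputable def psiEps (φ : ℝ → ℝ) (ν : Measure ℝ) (ε z : ℝ) : ℝ :=
  cEps φ ν ε * ∫ q : ℝ, phiEps φ ε (z - q) ∂ν

section Aux
open Filter Set

variable {φ : ℝ → ℝ} {f : ℝ → ℝ}

lemma scale_integral (g : ℝ → ℝ) {ε : ℝ} (hε : 0 < ε) :
    ∫ z : ℝ, g z = ε • ∫ u : ℝ, g (ε * u) := by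
  rw [MeasureTheory.Measure.integral_comp_mul_left g ε, abs_of_pos (inv_pos.2 hε),
    smul_smul, mul_inv_cancel₀ hε.ne', one_smul]

lemma phi_mul_shift_integrable (hc : Continuous φ) (hsupp : HasCompactSupport φ) (c : ℝ) :
    Integrable (fun u : ℝ => φ u * φ (u + c)) := by
  exact ((hc.mul (hc.comp (continuous_id.add continuous_const))).integrable_of_hasCompactSupport
    (hsupp.mul_right))

lemma phi_sq_compactSupport (hsupp : HasCompactSupport φ) :
    HasCompactSupport (fun u : ℝ => φ u ^ 2) := by
  simpa [pow_two] using (show HasCompactSupport (fun u : ℝ => φ u * φ u) from hsupp.mul_right (f' := φ))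

lemma phi_sq_integrable (hc : Continuous φ) (hsupp : HasCompactSupport φ) :
    Integrable (fun u : ℝ => φ u ^ 2) :=
  (hc.pow 2).integrable_of_hasCompactSupport (phi_sq_compactSupport hsupp)

lemma phi_sq_shift_integrable (hc : Continuous φ) (hsupp : HasCompactSupport φ) (c : ℝ) :
    Integrable (fun u : ℝ => φ (u + c) ^ 2) :=
  ((hc.comp (continuous_id.add continuous_const)).pow 2).integrable_of_hasCompactSupport
    ((phi_sq_compactSupport hsupp).comp_homeomorph (Homeomorph.addRight c))

lemma J_le_one (hc : Continuous φ) (hsupp : HasCompactSupport φ) (hnn : ∀ q, 0 ≤ φ q)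
    (hnorm : ∫ q : ℝ, (φ q) ^ 2 = 1) (c : ℝ) :
    ∫ u : ℝ, φ u * φ (u + c) ≤ 1 := by
  have h2 : Integrable (fun u : ℝ => (φ u ^ 2 + φ (u + c) ^ 2) / 2) :=
    ((phi_sq_integrable hc hsupp).add (phi_sq_shift_integrable hc hsupp c)).div_const 2
  calc ∫ u : ℝ, φ u * φ (u + c)
      ≤ ∫ u : ℝ, (φ u ^ 2 + φ (u + c) ^ 2) / 2 := by
        refine integral_mono_of_nonneg (Filter.Eventually.of_forall fun u =>
          mul_nonneg (hnn u) (hnn _)) h2 (Filter.Eventually.of_forall fun u => ?_)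
        nlinarith [sq_nonneg (φ u - φ (u + c))]
    _ = 1 := by
        rw [integral_div, integral_add (phi_sq_integrable hc hsupp)
          (phi_sq_shift_integrable hc hsupp c), hnorm,
          integral_add_right_eq_self (fun u : ℝ => φ u ^ 2) c, hnorm]
        norm_num

lemma key_subst (g : ℝ → ℝ) {ε : ℝ} (hε : 0 < ε) (q₁ q₂ : ℝ) :
    ∫ z : ℝ, g z * (phiEps φ ε (z - q₁) * phiEps φ ε (z - q₂))
      = ∫ u : ℝ, g (q₁ + ε * u) * (φ u * φ (u + (q₁ - q₂) / ε)) := by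
  have h1 : ∫ z : ℝ, g z * (phiEps φ ε (z - q₁) * phiEps φ ε (z - q₂))
      = ∫ z : ℝ, g (z + q₁) * (phiEps φ ε (z + q₁ - q₁) * phiEps φ ε (z + q₁ - q₂)) :=
    (integral_add_right_eq_self
      (fun z => g z * (phiEps φ ε (z - q₁) * phiEps φ ε (z - q₂))) q₁).symm
  rw [h1, scale_integral _ hε]
  have h2 : ∀ u : ℝ, g (ε * u + q₁) * (phiEps φ ε (ε * u + q₁ - q₁) * phiEps φ ε (ε * u + q₁ - q₂))
      = ε⁻¹ • (g (q₁ + ε * u) * (φ u * φ (u + (q₁ - q₂) / ε))) := by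
    intro u
    have hs : (Real.sqrt ε)⁻¹ * (Real.sqrt ε)⁻¹ = ε⁻¹ := by
      rw [← mul_inv, Real.mul_self_sqrt hε.le]
    have e1 : (ε * u + q₁ - q₁) / ε = u := by field_simp; ring
    have e2 : (ε * u + q₁ - q₂) / ε = u + (q₁ - q₂) / ε := by field_simp; ring
    rw [phiEps, phiEps, e1, e2, add_comm (ε * u) q₁, smul_eq_mul, ← hs]
    ring
  simp only [h2]
  rw [integral_smul, smul_smul, mul_inv_cancel₀ hε.ne', one_smul]

lemma PhiEps_subst {ε : ℝ} (hε : 0 < ε) (z : ℝ) :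
    PhiEps φ ε z = ∫ u : ℝ, φ u * φ (u + z / ε) := by
  rw [PhiEps, scale_integral _ hε]
  have h2 : ∀ u : ℝ, phiEps φ ε (z + ε * u) * phiEps φ ε (ε * u)
      = ε⁻¹ • (φ u * φ (u + z / ε)) := by
    intro u
    have hs : (Real.sqrt ε)⁻¹ * (Real.sqrt ε)⁻¹ = ε⁻¹ := by
      rw [← mul_inv, Real.mul_self_sqrt hε.le]
    have e1 : (z + ε * u) / ε = u + z / ε := by field_simp; ring
    have e2 : (ε * u) / ε = u := by field_simp
    rw [phiEps, phiEps, e1, e2, smul_eq_mul, ← hs]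
    ring
  simp only [h2]
  rw [integral_smul, smul_smul, mul_inv_cancel₀ hε.ne', one_smul]

lemma exists_R (hsupp : HasCompactSupport φ) :
    ∃ R : ℝ, 0 < R ∧ ∀ u : ℝ, φ u ≠ 0 → |u| ≤ R := by
  obtain ⟨r, hr⟩ := hsupp.isBounded.subset_closedBall 0
  refine ⟨max r 1, lt_of_lt_of_le one_pos (le_max_right _ _), fun u hu => ?_⟩
  have h1 : u ∈ tsupport φ := subset_tsupport φ hu
  have h2 := hr h1
  rw [Metric.mem_closedBall, Real.dist_eq, sub_zero] at h2
  exact h2.trans (le_max_left _ _)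

lemma K_bound (hc : Continuous φ) (hsupp : HasCompactSupport φ) (hnn : ∀ q, 0 ≤ φ q)
    (hnorm : ∫ q : ℝ, (φ q) ^ 2 = 1) {M : ℝ} (hM0 : 0 ≤ M)
    (g : ℝ → ℝ) (hg : ∀ u, |g u| ≤ M) (c : ℝ) :
    |∫ u : ℝ, g u * (φ u * φ (u + c))| ≤ M := by
  have h1 : |∫ u : ℝ, g u * (φ u * φ (u + c))| ≤ ∫ u : ℝ, |g u| * (φ u * φ (u + c)) := by
    have := norm_integral_le_integral_norm (μ := (volume : Measure ℝ))
      (fun u : ℝ => g u * (φ u * φ (u + c)))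
    simp only [Real.norm_eq_abs, abs_mul] at this
    simpa [abs_of_nonneg (hnn _)] using this
  have h2 : ∫ u : ℝ, |g u| * (φ u * φ (u + c)) ≤ ∫ u : ℝ, M * (φ u * φ (u + c)) := by
    refine integral_mono_of_nonneg (Eventually.of_forall fun u =>
      mul_nonneg (abs_nonneg _) (mul_nonneg (hnn u) (hnn _)))
      ((phi_mul_shift_integrable hc hsupp c).const_mul M)
      (Eventually.of_forall fun u => ?_)
    dsimp only
    exact mul_le_mul_of_nonneg_right (hg u) (mul_nonneg (hnn u) (hnn _))
  have h3 : ∫ u : ℝ, M * (φ u * φ (u + c)) ≤ M := by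
    rw [integral_const_mul]
    exact mul_le_of_le_one_right hM0 (J_le_one hc hsupp hnn hnorm c)
  linarith

lemma tendsto_diag (hc : Continuous φ) (hsupp : HasCompactSupport φ)
    (hnorm : ∫ q : ℝ, (φ q) ^ 2 = 1)
    (hfc : Continuous f) {M : ℝ} (hM : ∀ x, |f x| ≤ M) (q : ℝ) :
    Filter.Tendsto (fun ε : ℝ => ∫ u : ℝ, f (q + ε * u) * (φ u * φ u))
      (nhdsWithin 0 (Set.Ioi 0)) (nhds (f q)) := by
  have key := tendsto_integral_filter_of_dominated_convergence (μ := (volume : Measure ℝ))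
    (l := nhdsWithin (0:ℝ) (Set.Ioi 0))
    (F := fun ε u => f (q + ε * u) * (φ u * φ u)) (f := fun u => f q * (φ u * φ u))
    (bound := fun u => M * (φ u ^ 2))
    (Eventually.of_forall fun ε =>
      ((hfc.comp (continuous_const.add (continuous_const.mul continuous_id))).mul
        (hc.mul hc)).aestronglyMeasurable)
    (Eventually.of_forall fun ε => Eventually.of_forall fun u => by
      rw [Real.norm_eq_abs, abs_mul, abs_mul_self, sq]
      exact mul_le_mul_of_nonneg_right (hM _) (mul_self_nonneg _))
    ((phi_sq_integrable hc hsupp).const_mul M)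
    (Eventually.of_forall fun u => by
      have harg : Filter.Tendsto (fun ε : ℝ => q + ε * u) (nhdsWithin 0 (Set.Ioi 0)) (nhds q) := by
        have : Filter.Tendsto (fun ε : ℝ => q + ε * u) (nhds 0) (nhds q) :=
          ((continuous_const.add (continuous_id.mul continuous_const)).tendsto' 0 q (by simp))
        exact this.mono_left nhdsWithin_le_nhds
      exact ((hfc.tendsto q).comp harg).mul_const _)
  have hval : ∫ u : ℝ, f q * (φ u * φ u) = f q := by
    rw [integral_const_mul]
    have : ∫ u : ℝ, φ u * φ u = 1 := by simpa [sq] using hnorm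
    rw [this, mul_one]
  rwa [hval] at key

lemma tendsto_offdiag {R : ℝ} (hR0 : 0 < R) (hR : ∀ u : ℝ, φ u ≠ 0 → |u| ≤ R)
    {d : ℝ} (hd : d ≠ 0) (g : ℝ → ℝ → ℝ) :
    Filter.Tendsto (fun ε : ℝ => ∫ u : ℝ, g ε u * (φ u * φ (u + d / ε)))
      (nhdsWithin 0 (Set.Ioi 0)) (nhds 0) := by
  have hmem : Set.Ioo (0:ℝ) (|d| / (2 * R + 1)) ∈ nhdsWithin (0:ℝ) (Set.Ioi 0) :=
    Ioo_mem_nhdsGT_of_mem ⟨le_refl 0, div_pos (abs_pos.2 hd) (by linarith)⟩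
  have hvan : ∀ ε ∈ Set.Ioo (0:ℝ) (|d| / (2 * R + 1)),
      (∫ u : ℝ, g ε u * (φ u * φ (u + d / ε))) = 0 := by
    intro ε hε
    have hfar : 2 * R < |d / ε| := by
      rw [abs_div, abs_of_pos hε.1]
      rw [lt_div_iff₀ hε.1]
      have h2 : ε * (2 * R + 1) < |d| := by
        calc ε * (2 * R + 1) < |d| / (2 * R + 1) * (2 * R + 1) := by
              apply mul_lt_mul_of_pos_right hε.2 (by linarith)
          _ = |d| := by field_simp
      nlinarith [hε.1, h2]
    have hzero : ∀ u : ℝ, φ u * φ (u + d / ε) = 0 := by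
      intro u
      by_contra h
      obtain ⟨h1, h2⟩ := mul_ne_zero_iff.mp h
      have b1 := hR u h1
      have b2 := hR (u + d / ε) h2
      have : |d / ε| ≤ 2 * R := by
        have h3 : |u + d / ε - u| ≤ |u + d / ε| + |u| := by
          simpa using abs_sub (u + d / ε) u
        have h4 : u + d / ε - u = d / ε := by ring
        rw [h4] at h3
        linarith
      linarith
    simp [hzero]
  refine Filter.Tendsto.congr' ?_ tendsto_const_nhds
  filter_upwards [hmem] with ε hε
  exact (hvan ε hε).symm

end Aux

section Diag
open Filter Set

variable (ν : Measure ℝ) [IsFiniteMeasure ν]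

noncomputable def Adef : Set ℝ := {a : ℝ | ν {a} ≠ 0}

lemma A_countable : (Adef ν).Countable := by
  have h := Measure.countable_meas_level_set_pos (μ := ν) (g := (id : ℝ → ℝ)) measurable_id
  refine h.mono ?_
  intro a ha
  simp only [Adef, Set.mem_setOf_eq, id_eq] at *
  have he : {x : ℝ | x = a} = {a} := Set.setOf_eq_eq_singleton
  rw [he]
  exact pos_iff_ne_zero.mpr ha

lemma diag_meas : MeasurableSet {p : ℝ × ℝ | p.1 - p.2 = 0} := by
  have : {p : ℝ × ℝ | p.1 - p.2 = 0} = (fun p : ℝ × ℝ => p.1 - p.2) ⁻¹' {0} := rfl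
  rw [this]
  exact (measurable_fst.sub measurable_snd) (measurableSet_singleton 0)

lemma prod_diag_eq : ν.prod ν {p : ℝ × ℝ | p.1 - p.2 = 0}
    = ∑' a : (Adef ν), ν {(a : ℝ)} * ν {(a : ℝ)} := by
  rw [Measure.prod_apply (diag_meas)]
  have hpre : ∀ x : ℝ, (Prod.mk x ⁻¹' {p : ℝ × ℝ | p.1 - p.2 = 0}) = {x} := by
    intro x; ext y; simp [sub_eq_zero, eq_comm]
  simp_rw [hpre]
  have hstep : ∫⁻ x, ν {x} ∂ν = ∫⁻ x in Adef ν, ν {x} ∂ν := by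
    rw [← lintegral_indicator ((A_countable ν).measurableSet)]
    refine lintegral_congr fun x => ?_
    by_cases hx : x ∈ Adef ν
    · rw [Set.indicator_of_mem hx]
    · rw [Set.indicator_of_notMem hx]
      simpa [Adef, Set.mem_setOf_eq, not_not] using hx
  rw [hstep, lintegral_countable _ (A_countable ν)]

lemma denom_toReal : (ν.prod ν {p : ℝ × ℝ | p.1 - p.2 = 0}).toReal
    = ∑' a : (Adef ν), ((ν {(a : ℝ)}).toReal) ^ 2 := by
  rw [prod_diag_eq, ENNReal.tsum_toReal_eq
    (fun a => ENNReal.mul_ne_top (measure_ne_top ν _) (measure_ne_top ν _))]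
  congr 1
  funext a
  rw [ENNReal.toReal_mul, sq]

noncomputable def Ddef : Set (ℝ × ℝ) := (fun a : ℝ => (a, a)) '' (Adef ν)

lemma D_countable : (Ddef ν).Countable := (A_countable ν).image _

lemma diag_ae_eq : {p : ℝ × ℝ | p.1 - p.2 = 0} =ᶠ[ae (ν.prod ν)] (Ddef ν) := by
  rw [MeasureTheory.ae_eq_set]
  constructor
  · rw [Measure.prod_apply (diag_meas.diff (D_countable ν).measurableSet)]
    have hpre : ∀ x : ℝ,
        ν (Prod.mk x ⁻¹' ({p : ℝ × ℝ | p.1 - p.2 = 0} \ Ddef ν)) = 0 := by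
      intro x
      by_cases hx : x ∈ Adef ν
      · have : Prod.mk x ⁻¹' ({p : ℝ × ℝ | p.1 - p.2 = 0} \ Ddef ν) = ∅ := by
          ext y
          simp only [Set.mem_preimage, Set.mem_diff, Set.mem_setOf_eq, Ddef, Set.mem_image,
            Set.mem_empty_iff_false, iff_false, not_and, not_not, sub_eq_zero]
          intro hxy
          exact ⟨x, hx, by rw [← hxy]⟩
        rw [this, measure_empty]
      · have : Prod.mk x ⁻¹' ({p : ℝ × ℝ | p.1 - p.2 = 0} \ Ddef ν) ⊆ {x} := by
          intro y hy
          have := hy.1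
          simp only [Set.mem_setOf_eq, sub_eq_zero] at this
          simp [this.symm]
        refine le_antisymm (le_trans (measure_mono this) ?_) zero_le
        simpa [Adef, Set.mem_setOf_eq, not_not] using hx
    simp_rw [hpre]
    simp
  · have : Ddef ν \ {p : ℝ × ℝ | p.1 - p.2 = 0} = ∅ := by
      ext p
      simp only [Set.mem_diff, Ddef, Set.mem_image, Set.mem_setOf_eq,
        Set.mem_empty_iff_false, iff_false, not_and, not_not]
      rintro ⟨a, _, rfl⟩
      simp
    rw [this, measure_empty]

lemma num_eq (f : ℝ → ℝ) (hfc : Continuous f) {M : ℝ} (hM : ∀ x, |f x| ≤ M) :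
    ∫ p : ℝ × ℝ, Set.indicator {p : ℝ × ℝ | p.1 - p.2 = 0} (fun p => f p.1) p ∂ν.prod ν
      = ∑' a : (Adef ν), f (a : ℝ) * ((ν {(a : ℝ)}).toReal) ^ 2 := by
  have hInt : IntegrableOn (fun p : ℝ × ℝ => f p.1) (Ddef ν) (ν.prod ν) := by
    refine Integrable.mono' (integrable_const M) ?_ ?_
    · exact (hfc.comp continuous_fst).aestronglyMeasurable
    · exact Eventually.of_forall fun p => by simpa [Real.norm_eq_abs] using hM p.1
  rw [integral_indicator (diag_meas), setIntegral_congr_set (diag_ae_eq ν),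
    setIntegral_countable _ (D_countable ν) hInt]
  have hinj : Function.Injective (fun a : ℝ => (a, a)) := fun a b h => congrArg Prod.fst h
  unfold Ddef
  rw [← Equiv.tsum_eq (Equiv.Set.image (fun a : ℝ => (a, a)) (Adef ν) hinj)]
  congr 1
  funext a
  have hcoe : ((Equiv.Set.image (fun a : ℝ => (a, a)) (Adef ν) hinj) a : ℝ × ℝ)
      = ((a : ℝ), (a : ℝ)) := rfl
  rw [hcoe]
  have hsing : ({((a : ℝ), (a : ℝ))} : Set (ℝ × ℝ)) = {(a : ℝ)} ×ˢ {(a : ℝ)} := by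
    rw [Set.singleton_prod_singleton]
  rw [measureReal_def, hsing, Measure.prod_prod, ENNReal.toReal_mul, smul_eq_mul, sq]
  ring

omit [IsFiniteMeasure ν] in
lemma sum_transfer (g : ℝ → ℝ) :
    ∑' a : (Adef ν), g (a : ℝ) = ∑' a : {a : ℝ // ν {a} ≠ 0}, g (a : ℝ) := rfl

end Diag

section Fubini
open Filter Set

variable {φ f : ℝ → ℝ}

lemma phiEps_cont (hc : Continuous φ) (ε : ℝ) : Continuous (phiEps φ ε) :=
  continuous_const.mul (hc.comp (continuous_id.div_const ε))

lemma phiEps_nonneg (hnn : ∀ q, 0 ≤ φ q) (ε t : ℝ) : 0 ≤ phiEps φ ε t :=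
  mul_nonneg (inv_nonneg.2 (Real.sqrt_nonneg _)) (hnn _)

lemma PhiEps_nonneg (hnn : ∀ q, 0 ≤ φ q) (ε z : ℝ) : 0 ≤ PhiEps φ ε z :=
  integral_nonneg fun q => mul_nonneg (phiEps_nonneg hnn ε _) (phiEps_nonneg hnn ε _)

lemma K_meas (hφc : Continuous φ) (hfc : Continuous f) (ν : Measure ℝ) [IsFiniteMeasure ν]
    (ε : ℝ) :
    AEStronglyMeasurable
      (fun p : ℝ × ℝ => ∫ z : ℝ, f z * (phiEps φ ε (z - p.1) * phiEps φ ε (z - p.2)))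
      (ν.prod ν) := by
  have hcont : Continuous (fun q : (ℝ × ℝ) × ℝ =>
      f q.2 * (phiEps φ ε (q.2 - q.1.1) * phiEps φ ε (q.2 - q.1.2))) := by
    refine (hfc.comp continuous_snd).mul (Continuous.mul ?_ ?_)
    · exact (phiEps_cont hφc ε).comp (continuous_snd.sub (continuous_fst.fst))
    · exact (phiEps_cont hφc ε).comp (continuous_snd.sub (continuous_fst.snd))
  exact (hcont.stronglyMeasurable.integral_prod_right').aestronglyMeasurable

lemma Phi_meas (hφc : Continuous φ) (ν : Measure ℝ) [IsFiniteMeasure ν] (ε : ℝ) :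
    AEStronglyMeasurable (fun p : ℝ × ℝ => PhiEps φ ε (p.1 - p.2)) (ν.prod ν) := by
  have hcont : Continuous (fun q : ℝ × ℝ => phiEps φ ε (q.1 + q.2) * phiEps φ ε q.2) :=
    ((phiEps_cont hφc ε).comp (continuous_fst.add continuous_snd)).mul
      ((phiEps_cont hφc ε).comp continuous_snd)
  have hm : StronglyMeasurable (fun z : ℝ => PhiEps φ ε z) :=
    hcont.stronglyMeasurable.integral_prod_right'
  exact (hm.comp_measurable (measurable_fst.sub measurable_snd)).aestronglyMeasurable

lemma fubini_step (hφc : Continuous φ) (hφsupp : HasCompactSupport φ)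
    (hfc : Continuous f) (hfsupp : HasCompactSupport f)
    (ν : Measure ℝ) [IsFiniteMeasure ν] (ε : ℝ) :
    ∫ z : ℝ, f z * (psiEps φ ν ε z) ^ 2
      = (cEps φ ν ε) ^ 2
        * ∫ p : ℝ × ℝ, (∫ z : ℝ, f z * (phiEps φ ε (z - p.1) * phiEps φ ε (z - p.2)))
            ∂ν.prod ν := by
  obtain ⟨Cφ, hCφ⟩ := hφsupp.exists_bound_of_continuous hφc
  set B : ℝ := (Real.sqrt ε)⁻¹ * Cφ with hBdef
  have hB : ∀ t : ℝ, |phiEps φ ε t| ≤ B := by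
    intro t
    rw [phiEps, abs_mul, abs_inv, abs_of_nonneg (Real.sqrt_nonneg _)]
    exact mul_le_mul_of_nonneg_left (by simpa [Real.norm_eq_abs] using hCφ (t / ε))
      (inv_nonneg.2 (Real.sqrt_nonneg _))
  have hB0 : 0 ≤ B := le_trans (abs_nonneg _) (hB 0)
  set W : ℝ → ℝ × ℝ → ℝ :=
    fun z p => f z * (phiEps φ ε (z - p.1) * phiEps φ ε (z - p.2)) with hWdef
  have hWcont : Continuous (Function.uncurry W) := by
    refine (hfc.comp continuous_fst).mul (Continuous.mul ?_ ?_)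
    · exact (phiEps_cont hφc ε).comp (continuous_fst.sub (continuous_snd.fst))
    · exact (phiEps_cont hφc ε).comp (continuous_fst.sub (continuous_snd.snd))
  have hWbd : ∀ z p, ‖W z p‖ ≤ |f z| * (B * B) := by
    intro z p
    rw [hWdef]
    dsimp only
    rw [Real.norm_eq_abs, abs_mul, abs_mul]
    exact mul_le_mul_of_nonneg_left (mul_le_mul (hB _) (hB _) (abs_nonneg _) hB0) (abs_nonneg _)
  have hWint : Integrable (Function.uncurry W) ((volume : Measure ℝ).prod (ν.prod ν)) := by
    refine (integrable_prod_iff hWcont.aestronglyMeasurable).mpr ⟨?_, ?_⟩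
    · refine Filter.Eventually.of_forall fun z => ?_
      refine Integrable.mono' (integrable_const (|f z| * (B * B))) ?_
        (Filter.Eventually.of_forall fun p => hWbd z p)
      refine Continuous.aestronglyMeasurable ?_
      show Continuous fun p : ℝ × ℝ => f z * (phiEps φ ε (z - p.1) * phiEps φ ε (z - p.2))
      exact continuous_const.mul (((phiEps_cont hφc ε).comp (continuous_const.sub continuous_fst)).mul
        ((phiEps_cont hφc ε).comp (continuous_const.sub continuous_snd)))
    · have hmeas : AEStronglyMeasurable
          (fun z : ℝ => ∫ p : ℝ × ℝ, ‖W z p‖ ∂ν.prod ν) volume := by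
        have : StronglyMeasurable (fun q : ℝ × (ℝ × ℝ) => ‖Function.uncurry W q‖) :=
          hWcont.norm.stronglyMeasurable
        exact this.integral_prod_right'.aestronglyMeasurable
      refine Integrable.mono'
        (((hfc.integrable_of_hasCompactSupport hfsupp).abs).mul_const
          (B * B * (ν.prod ν Set.univ).toReal)) hmeas
        (Filter.Eventually.of_forall fun z => ?_)
      have hnn : 0 ≤ ∫ p : ℝ × ℝ, ‖W z p‖ ∂ν.prod ν := integral_nonneg fun p => norm_nonneg _
      show ‖∫ p : ℝ × ℝ, ‖W z p‖ ∂ν.prod ν‖ ≤ |f z| * (B * B * ((ν.prod ν) Set.univ).toReal)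
      rw [Real.norm_eq_abs, abs_of_nonneg hnn]
      calc ∫ p : ℝ × ℝ, ‖W z p‖ ∂ν.prod ν
          ≤ ∫ _p : ℝ × ℝ, |f z| * (B * B) ∂ν.prod ν := by
            refine integral_mono_of_nonneg (Filter.Eventually.of_forall fun p => norm_nonneg _)
              (integrable_const _) (Filter.Eventually.of_forall fun p => hWbd z p)
        _ = |f z| * (B * B * (ν.prod ν Set.univ).toReal) := by
            rw [integral_const, smul_eq_mul, measureReal_def]; ring
  have hpt : ∀ z : ℝ, f z * (psiEps φ ν ε z) ^ 2
      = (cEps φ ν ε) ^ 2 * ∫ p : ℝ × ℝ, W z p ∂ν.prod ν := by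
    intro z
    have hprod : (∫ q : ℝ, phiEps φ ε (z - q) ∂ν) * (∫ q : ℝ, phiEps φ ε (z - q) ∂ν)
        = ∫ p : ℝ × ℝ, phiEps φ ε (z - p.1) * phiEps φ ε (z - p.2) ∂ν.prod ν :=
      (integral_prod_mul (fun q => phiEps φ ε (z - q)) (fun q => phiEps φ ε (z - q))).symm
    calc f z * (psiEps φ ν ε z) ^ 2
        = (cEps φ ν ε) ^ 2 * (f z * ((∫ q : ℝ, phiEps φ ε (z - q) ∂ν)
            * (∫ q : ℝ, phiEps φ ε (z - q) ∂ν))) := by rw [psiEps]; ring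
      _ = (cEps φ ν ε) ^ 2 * (f z
            * ∫ p : ℝ × ℝ, phiEps φ ε (z - p.1) * phiEps φ ε (z - p.2) ∂ν.prod ν) := by
          rw [hprod]
      _ = (cEps φ ν ε) ^ 2 * ∫ p : ℝ × ℝ, W z p ∂ν.prod ν := by
          simp only [hWdef]
          rw [integral_const_mul]
  calc ∫ z : ℝ, f z * (psiEps φ ν ε z) ^ 2
      = ∫ z : ℝ, (cEps φ ν ε) ^ 2 * ∫ p : ℝ × ℝ, W z p ∂ν.prod ν :=
        integral_congr_ae (Filter.Eventually.of_forall hpt)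
    _ = (cEps φ ν ε) ^ 2 * ∫ z : ℝ, (∫ p : ℝ × ℝ, W z p ∂ν.prod ν) := integral_const_mul _ _
    _ = (cEps φ ν ε) ^ 2 * ∫ p : ℝ × ℝ, (∫ z : ℝ, W z p) ∂ν.prod ν := by
        rw [integral_integral_swap hWint]
    _ = (cEps φ ν ε) ^ 2
        * ∫ p : ℝ × ℝ, (∫ z : ℝ, f z * (phiEps φ ε (z - p.1) * phiEps φ ε (z - p.2)))
            ∂ν.prod ν := by simp only [hWdef]

end Fubini

theorem stmt_8 (φ : ℝ → ℝ) (hsmooth : ContDiff ℝ (⊤ : ℕ∞) φ) (hsupp : HasCompactSupport φ)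
    (hnn : ∀ q : ℝ, 0 ≤ φ q) (hsym : ∀ q : ℝ, φ (-q) = φ q)
    (hnorm : ∫ q : ℝ, (φ q) ^ 2 = 1)
    (ν : Measure ℝ) [IsFiniteMeasure ν]
    (hatom : 0 < ν.prod ν {p : ℝ × ℝ | p.1 - p.2 = 0})
    (hpsinorm : ∀ ε : ℝ, 0 < ε → ∫ z : ℝ, (psiEps φ ν ε z) ^ 2 = 1)
    (f : ℝ → ℝ) (hf : ContDiff ℝ (⊤ : ℕ∞) f) (hfsupp : HasCompactSupport f) :
    Filter.Tendsto (fun ε : ℝ => ∫ z : ℝ, f z * (psiEps φ ν ε z) ^ 2)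
      (nhdsWithin 0 (Set.Ioi 0))
      (nhds ((∑' a : {a : ℝ // ν {a} ≠ 0}, f (a : ℝ) * ((ν {(a : ℝ)}).toReal) ^ 2) /
        ∑' a : {a : ℝ // ν {a} ≠ 0}, ((ν {(a : ℝ)}).toReal) ^ 2)) := by
  have hφc : Continuous φ := hsmooth.continuous
  have hfc : Continuous f := hf.continuous
  obtain ⟨M, hMn⟩ := hfsupp.exists_bound_of_continuous hfc
  have hM : ∀ x, |f x| ≤ M := fun x => by simpa [Real.norm_eq_abs] using hMn x
  have hM0 : 0 ≤ M := le_trans (abs_nonneg _) (hM 0)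
  obtain ⟨R, hR0, hR⟩ := exists_R hsupp
  set Δ : Set (ℝ × ℝ) := {p : ℝ × ℝ | p.1 - p.2 = 0} with hΔdef
  have hC0 : (ν.prod ν Δ).toReal ≠ 0 :=
    ENNReal.toReal_ne_zero.2 ⟨hatom.ne', measure_ne_top _ _⟩
  -- the denominator converges
  have hDen : Filter.Tendsto (fun ε : ℝ => ∫ p : ℝ × ℝ, PhiEps φ ε (p.1 - p.2) ∂ν.prod ν)
      (nhdsWithin 0 (Set.Ioi 0)) (nhds (ν.prod ν Δ).toReal) := by
    have key := tendsto_integral_filter_of_dominated_convergence (μ := ν.prod ν)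
      (l := nhdsWithin (0:ℝ) (Set.Ioi 0))
      (F := fun ε (p : ℝ × ℝ) => PhiEps φ ε (p.1 - p.2))
      (f := Set.indicator Δ (fun _ => (1:ℝ)))
      (bound := fun _ => (1:ℝ))
      (Filter.Eventually.of_forall fun ε => Phi_meas hφc ν ε)
      ?_ (integrable_const 1) ?_
    · rwa [integral_indicator_const (1:ℝ) diag_meas, smul_eq_mul, mul_one] at key
    · filter_upwards [self_mem_nhdsWithin] with ε hε
      refine Filter.Eventually.of_forall fun p => ?_
      rw [Real.norm_eq_abs, abs_of_nonneg (PhiEps_nonneg hnn ε _), PhiEps_subst hε]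
      exact J_le_one hφc hsupp hnn hnorm _
    · refine Filter.Eventually.of_forall fun p => ?_
      by_cases hpd : p.1 - p.2 = 0
      · have hmem : p ∈ Δ := hpd
        rw [Set.indicator_of_mem hmem]
        refine Filter.Tendsto.congr' ?_ tendsto_const_nhds
        filter_upwards [self_mem_nhdsWithin] with ε hε
        rw [hpd, PhiEps_subst hε]
        simp only [zero_div, add_zero]
        simpa [pow_two] using hnorm.symm
      · have hnot : p ∉ Δ := hpd
        rw [Set.indicator_of_notMem hnot]
        have h0 := tendsto_offdiag hR0 hR hpd (fun _ _ => (1:ℝ))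
        refine Filter.Tendsto.congr' ?_ h0
        filter_upwards [self_mem_nhdsWithin] with ε hε
        rw [PhiEps_subst hε]
        exact integral_congr_ae (Filter.Eventually.of_forall fun u => by simp)
  -- the numerator converges
  have hNum : Filter.Tendsto
      (fun ε : ℝ => ∫ p : ℝ × ℝ,
        (∫ z : ℝ, f z * (phiEps φ ε (z - p.1) * phiEps φ ε (z - p.2))) ∂ν.prod ν)
      (nhdsWithin 0 (Set.Ioi 0))
      (nhds (∫ p : ℝ × ℝ, Set.indicator Δ (fun p : ℝ × ℝ => f p.1) p ∂ν.prod ν)) := by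
    refine tendsto_integral_filter_of_dominated_convergence (μ := ν.prod ν)
      (bound := fun _ => M)
      (Filter.Eventually.of_forall fun ε => K_meas hφc hfc ν ε) ?_ (integrable_const M) ?_
    · filter_upwards [self_mem_nhdsWithin] with ε hε
      refine Filter.Eventually.of_forall fun p => ?_
      rw [Real.norm_eq_abs, key_subst _ hε]
      exact K_bound hφc hsupp hnn hnorm hM0 _ (fun u => hM _) _
    · refine Filter.Eventually.of_forall fun p => ?_
      by_cases hpd : p.1 - p.2 = 0
      · have hmem : p ∈ Δ := hpd
        rw [Set.indicator_of_mem hmem]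
        have h0 := tendsto_diag hφc hsupp hnorm hfc hM p.1
        refine Filter.Tendsto.congr' ?_ h0
        filter_upwards [self_mem_nhdsWithin] with ε hε
        rw [key_subst _ hε, hpd]
        simp only [zero_div, add_zero]
      · have hnot : p ∉ Δ := hpd
        rw [Set.indicator_of_notMem hnot]
        have h0 := tendsto_offdiag hR0 hR hpd (fun ε u => f (p.1 + ε * u))
        refine Filter.Tendsto.congr' ?_ h0
        filter_upwards [self_mem_nhdsWithin] with ε hε
        rw [key_subst _ hε]
  -- combine
  have hcomb : Filter.Tendsto
      (fun ε : ℝ => (∫ p : ℝ × ℝ, PhiEps φ ε (p.1 - p.2) ∂ν.prod ν)⁻¹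
        * ∫ p : ℝ × ℝ, (∫ z : ℝ, f z * (phiEps φ ε (z - p.1) * phiEps φ ε (z - p.2))) ∂ν.prod ν)
      (nhdsWithin 0 (Set.Ioi 0))
      (nhds ((ν.prod ν Δ).toReal⁻¹
        * ∫ p : ℝ × ℝ, Set.indicator Δ (fun p : ℝ × ℝ => f p.1) p ∂ν.prod ν)) :=
    (hDen.inv₀ hC0).mul hNum
  have heq : ∀ ε : ℝ, 0 < ε → ∫ z : ℝ, f z * (psiEps φ ν ε z) ^ 2
      = (∫ p : ℝ × ℝ, PhiEps φ ε (p.1 - p.2) ∂ν.prod ν)⁻¹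
        * ∫ p : ℝ × ℝ, (∫ z : ℝ, f z * (phiEps φ ε (z - p.1) * phiEps φ ε (z - p.2)))
            ∂ν.prod ν := by
    intro ε hε
    rw [fubini_step hφc hsupp hfc hfsupp ν ε]
    congr 1
    have hDnn : 0 ≤ ∫ p : ℝ × ℝ, PhiEps φ ε (p.1 - p.2) ∂ν.prod ν :=
      integral_nonneg fun p => PhiEps_nonneg hnn ε _
    rw [cEps, inv_pow, Real.sq_sqrt hDnn]
  have hfinal : Filter.Tendsto (fun ε : ℝ => ∫ z : ℝ, f z * (psiEps φ ν ε z) ^ 2)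
      (nhdsWithin 0 (Set.Ioi 0))
      (nhds ((ν.prod ν Δ).toReal⁻¹
        * ∫ p : ℝ × ℝ, Set.indicator Δ (fun p : ℝ × ℝ => f p.1) p ∂ν.prod ν)) := by
    refine Filter.Tendsto.congr' ?_ hcomb
    filter_upwards [self_mem_nhdsWithin] with ε hε
    exact (heq ε hε).symm
  convert hfinal using 2
  rw [inv_mul_eq_div, hΔdef, num_eq ν f hfc hM, denom_toReal ν]
  rfl
end

section
/- For every δ > 0 and ε ∈ (0, δ), Γ_ε(z) ≤ h_δ(z) for all z ∈ ℝ, where Γ_ε(z) = c_ε² ∫∫ Φ_ε(z+q₁−q₂) dν²(q₁,q₂), h_δ(z) = (1/ν²(Δ₀)) ∫∫ Φ_δ(z+q₁−q₂) dν²(q₁,q₂), and Φ_ε(z) = ∫ φ_ε(z+q)φ_ε(q) dq with φ non-negative, symmetric, smooth, compactly supported, non-decreasing on (−∞,0], non-increasing on [0,∞). -/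
open MeasureTheory

namespace Stmt10Aux

/-- The unscaled autocorrelation. -/
noncomputable def Phi0 (φ : ℝ → ℝ) (z : ℝ) : ℝ := ∫ q : ℝ, φ (z + q) * φ q

variable {φ : ℝ → ℝ}

lemma phi_abs (hsym : ∀ q : ℝ, φ (-q) = φ q) (q : ℝ) : φ q = φ |q| := by
  rcases abs_cases q with ⟨h, _⟩ | ⟨h, _⟩
  · rw [h]
  · rw [h, hsym]

lemma phi_anti_abs (hsym : ∀ q : ℝ, φ (-q) = φ q) (hanti : AntitoneOn φ (Set.Ici 0))
    {x y : ℝ} (h : |x| ≤ |y|) : φ y ≤ φ x := by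
  rw [phi_abs hsym x, phi_abs hsym y]
  exact hanti (abs_nonneg x) (le_trans (abs_nonneg x) h) h

/-- Level sets of a symmetric unimodal function are squeezed between symmetric intervals. -/
lemma level_ball (hsupp : HasCompactSupport φ) (hsym : ∀ q : ℝ, φ (-q) = φ q)
    (hanti : AntitoneOn φ (Set.Ici 0)) {t : ℝ} (ht : 0 < t) :
    ∃ r : ℝ, 0 ≤ r ∧ Set.Ioo (-r) r ⊆ {q : ℝ | t < φ q} ∧
      {q : ℝ | t < φ q} ⊆ Set.Icc (-r) r := by
  set S := {q : ℝ | t < φ q} with hS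
  have hSsupp : S ⊆ tsupport φ := by
    intro q hq
    apply subset_tsupport
    intro h0
    simp only [hS, Set.mem_setOf_eq] at hq
    rw [h0] at hq; linarith
  have hbdd : BddAbove S := (hsupp.isBounded.subset hSsupp).bddAbove
  rcases Set.eq_empty_or_nonempty S with hSe | hSne
  · exact ⟨0, le_refl 0, by simp [hSe], by simp [hSe]⟩
  have hsymS : ∀ q, q ∈ S → -q ∈ S := by
    intro q hq
    simpa [hS, hsym] using hq
  set r := sSup S with hr
  obtain ⟨x, hx⟩ := hSne
  have hxr : x ≤ r := le_csSup hbdd hx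
  have hxr' : -x ≤ r := le_csSup hbdd (hsymS x hx)
  refine ⟨r, by linarith, ?_, ?_⟩
  · intro y hy
    have hyr : |y| < r := abs_lt.2 ⟨hy.1, hy.2⟩
    obtain ⟨u, hu, hyu⟩ := exists_lt_of_lt_csSup ⟨x, hx⟩ hyr
    have : φ u ≤ φ y := phi_anti_abs hsym hanti (le_trans hyu.le (le_abs_self u))
    exact lt_of_lt_of_le hu this
  · intro q hq
    constructor
    · have := le_csSup hbdd (hsymS q hq)
      linarith
    · exact le_csSup hbdd hq

/-- Measure of the intersection of a balanced set with a shifted balanced set. -/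
lemma meas_inter {A B : Set ℝ} {a b : ℝ}
    (hA1 : Set.Ioo (-a) a ⊆ A) (hA2 : A ⊆ Set.Icc (-a) a)
    (hB1 : Set.Ioo (-b) b ⊆ B) (hB2 : B ⊆ Set.Icc (-b) b) (z : ℝ) :
    volume {q : ℝ | q ∈ A ∧ z + q ∈ B} =
      ENNReal.ofReal (min a (b - z) - max (-a) (-b - z)) := by
  have hIoo : Set.Ioo (max (-a) (-b - z)) (min a (b - z)) ⊆ {q : ℝ | q ∈ A ∧ z + q ∈ B} := by
    intro q hq
    rw [Set.mem_Ioo, max_lt_iff, lt_min_iff] at hq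
    refine ⟨hA1 ⟨hq.1.1, hq.2.1⟩, hB1 ⟨by linarith [hq.1.2], by linarith [hq.2.2]⟩⟩
  have hIcc : {q : ℝ | q ∈ A ∧ z + q ∈ B} ⊆ Set.Icc (max (-a) (-b - z)) (min a (b - z)) := by
    intro q hq
    obtain ⟨h1, h2⟩ := hq
    have h1' := hA2 h1
    have h2' := hB2 h2
    rw [Set.mem_Icc] at h1' h2' ⊢
    constructor
    · exact max_le h1'.1 (by linarith [h2'.1])
    · exact le_min h1'.2 (by linarith [h2'.2])
  refine le_antisymm ?_ ?_
  · calc volume {q : ℝ | q ∈ A ∧ z + q ∈ B} ≤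
        volume (Set.Icc (max (-a) (-b - z)) (min a (b - z))) := measure_mono hIcc
      _ = ENNReal.ofReal (min a (b - z) - max (-a) (-b - z)) := Real.volume_Icc
  · calc ENNReal.ofReal (min a (b - z) - max (-a) (-b - z)) =
        volume (Set.Ioo (max (-a) (-b - z)) (min a (b - z))) := Real.volume_Ioo.symm
      _ ≤ volume {q : ℝ | q ∈ A ∧ z + q ∈ B} := measure_mono hIoo

lemma min_max_mono {a b z w : ℝ} (h0 : 0 ≤ z) (hzw : z ≤ w) :
    min a (b - w) - max (-a) (-b - w) ≤ min a (b - z) - max (-a) (-b - z) := by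
  simp only [min_def, max_def]
  split_ifs <;> linarith

lemma integrable_slice (hcont : Continuous φ) (hsupp : HasCompactSupport φ) (z : ℝ) :
    Integrable (fun q : ℝ => φ (z + q) * φ q) := by
  apply Continuous.integrable_of_hasCompactSupport
  · exact (hcont.comp (continuous_const.add continuous_id)).mul hcont
  · exact (hsupp.mul_left : HasCompactSupport (fun q : ℝ => φ (z + q) * φ q))

/-- Layercake representation of the autocorrelation integral. -/
lemma layercake (hcont : Continuous φ) (hnn : ∀ q : ℝ, 0 ≤ φ q) (z : ℝ) :
    (∫⁻ q : ℝ, ENNReal.ofReal (φ (z + q) * φ q)) =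
      ∫⁻ st : ℝ × ℝ, volume {q : ℝ | (0 < st.1 ∧ st.1 < φ (z + q)) ∧ 0 < st.2 ∧ st.2 < φ q} := by
  have hmeas : MeasurableSet {p : ℝ × (ℝ × ℝ) |
      (0 < p.2.1 ∧ p.2.1 < φ (z + p.1)) ∧ 0 < p.2.2 ∧ p.2.2 < φ p.1} := by
    apply MeasurableSet.inter
    · exact (measurableSet_lt measurable_const measurable_snd.fst).inter
        (measurableSet_lt measurable_snd.fst
          (hcont.measurable.comp (measurable_const.add measurable_fst)))
    · exact (measurableSet_lt measurable_const measurable_snd.snd).inter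
        (measurableSet_lt measurable_snd.snd (hcont.measurable.comp measurable_fst))
  have hmeasq : ∀ st : ℝ × ℝ, MeasurableSet
      {q : ℝ | (0 < st.1 ∧ st.1 < φ (z + q)) ∧ 0 < st.2 ∧ st.2 < φ q} := by
    intro st
    apply MeasurableSet.inter
    · exact (MeasurableSet.const _).inter
        (measurableSet_lt measurable_const
          (hcont.measurable.comp (measurable_const.add measurable_id)))
    · exact (MeasurableSet.const _).inter
        (measurableSet_lt measurable_const hcont.measurable)
  have step1 : ∀ q : ℝ, ENNReal.ofReal (φ (z + q) * φ q) =
      ∫⁻ st : ℝ × ℝ, Set.indicator {st : ℝ × ℝ |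
        (0 < st.1 ∧ st.1 < φ (z + q)) ∧ 0 < st.2 ∧ st.2 < φ q} 1 st := by
    intro q
    have hset : {st : ℝ × ℝ | (0 < st.1 ∧ st.1 < φ (z + q)) ∧ 0 < st.2 ∧ st.2 < φ q} =
        Set.Ioo 0 (φ (z + q)) ×ˢ Set.Ioo 0 (φ q) := by
      ext st; simp [Set.mem_prod, and_comm]
    rw [hset, lintegral_indicator_one (measurableSet_Ioo.prod measurableSet_Ioo),
      Measure.volume_eq_prod, Measure.prod_prod, Real.volume_Ioo, Real.volume_Ioo,
      sub_zero, sub_zero, ← ENNReal.ofReal_mul (hnn _)]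
  calc (∫⁻ q : ℝ, ENNReal.ofReal (φ (z + q) * φ q))
      = ∫⁻ q : ℝ, ∫⁻ st : ℝ × ℝ, Set.indicator {p : ℝ × (ℝ × ℝ) |
          (0 < p.2.1 ∧ p.2.1 < φ (z + p.1)) ∧ 0 < p.2.2 ∧ p.2.2 < φ p.1}
          1 (q, st) := by
        refine lintegral_congr fun q => ?_
        rw [step1 q]
        refine lintegral_congr fun st => ?_
        simp only [Set.indicator_apply, Set.mem_setOf_eq]
        split_ifs <;> rfl
    _ = ∫⁻ st : ℝ × ℝ, ∫⁻ q : ℝ, Set.indicator {p : ℝ × (ℝ × ℝ) |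
          (0 < p.2.1 ∧ p.2.1 < φ (z + p.1)) ∧ 0 < p.2.2 ∧ p.2.2 < φ p.1}
          1 (q, st) := by
        apply lintegral_lintegral_swap
        exact (measurable_one.indicator hmeas).aemeasurable
    _ = ∫⁻ st : ℝ × ℝ, volume {q : ℝ | (0 < st.1 ∧ st.1 < φ (z + q)) ∧ 0 < st.2 ∧ st.2 < φ q} := by
        refine lintegral_congr fun st => ?_
        have he : ∀ q : ℝ, Set.indicator {p : ℝ × (ℝ × ℝ) |
            (0 < p.2.1 ∧ p.2.1 < φ (z + p.1)) ∧ 0 < p.2.2 ∧ p.2.2 < φ p.1} 1 (q, st) =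
            Set.indicator {q : ℝ | (0 < st.1 ∧ st.1 < φ (z + q)) ∧ 0 < st.2 ∧ st.2 < φ q}
            (1 : ℝ → ENNReal) q := by
          intro q
          simp only [Set.indicator_apply, Set.mem_setOf_eq]
          rfl
        simp_rw [he]
        rw [lintegral_indicator_one (hmeasq st)]


lemma Phi0_anti (hcont : Continuous φ) (hsupp : HasCompactSupport φ)
    (hnn : ∀ q : ℝ, 0 ≤ φ q) (hsym : ∀ q : ℝ, φ (-q) = φ q)
    (hanti : AntitoneOn φ (Set.Ici 0)) {z w : ℝ} (h0 : 0 ≤ z) (hzw : z ≤ w) :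
    Phi0 φ w ≤ Phi0 φ z := by
  have hintw := integrable_slice hcont hsupp w
  have hintz := integrable_slice hcont hsupp z
  have hnnz : 0 ≤ Phi0 φ z := integral_nonneg fun q => mul_nonneg (hnn _) (hnn _)
  have key : (∫⁻ q : ℝ, ENNReal.ofReal (φ (w + q) * φ q)) ≤
      ∫⁻ q : ℝ, ENNReal.ofReal (φ (z + q) * φ q) := by
    rw [layercake hcont hnn w, layercake hcont hnn z]
    refine lintegral_mono fun st => ?_
    by_cases hs : 0 < st.1
    · by_cases ht : 0 < st.2
      · obtain ⟨b, hb0, hb1, hb2⟩ := level_ball hsupp hsym hanti hs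
        obtain ⟨a, ha0, ha1, ha2⟩ := level_ball hsupp hsym hanti ht
        have hset : ∀ y : ℝ, {q : ℝ | (0 < st.1 ∧ st.1 < φ (y + q)) ∧ 0 < st.2 ∧ st.2 < φ q} =
            {q : ℝ | q ∈ {x : ℝ | st.2 < φ x} ∧ y + q ∈ {x : ℝ | st.1 < φ x}} := by
          intro y; ext q
          simp only [Set.mem_setOf_eq]
          constructor
          · rintro ⟨⟨-, h1⟩, -, h2⟩; exact ⟨h2, h1⟩
          · rintro ⟨h2, h1⟩; exact ⟨⟨hs, h1⟩, ht, h2⟩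
        rw [hset w, hset z, meas_inter ha1 ha2 hb1 hb2 w, meas_inter ha1 ha2 hb1 hb2 z]
        exact ENNReal.ofReal_le_ofReal (min_max_mono h0 hzw)
      · have : {q : ℝ | (0 < st.1 ∧ st.1 < φ (w + q)) ∧ 0 < st.2 ∧ st.2 < φ q} = ∅ := by
          ext q; simp [ht]
        rw [this]; simp
    · have : {q : ℝ | (0 < st.1 ∧ st.1 < φ (w + q)) ∧ 0 < st.2 ∧ st.2 < φ q} = ∅ := by
        ext q; simp [hs]
      rw [this]; simp
  have hofw : ENNReal.ofReal (Phi0 φ w) = ∫⁻ q : ℝ, ENNReal.ofReal (φ (w + q) * φ q) :=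
    ofReal_integral_eq_lintegral_ofReal hintw (ae_of_all _ fun q => mul_nonneg (hnn _) (hnn _))
  have hofz : ENNReal.ofReal (Phi0 φ z) = ∫⁻ q : ℝ, ENNReal.ofReal (φ (z + q) * φ q) :=
    ofReal_integral_eq_lintegral_ofReal hintz (ae_of_all _ fun q => mul_nonneg (hnn _) (hnn _))
  rw [← ENNReal.ofReal_le_ofReal_iff hnnz, hofw, hofz]
  exact key

lemma Phi0_abs (hsym : ∀ q : ℝ, φ (-q) = φ q) (z : ℝ) : Phi0 φ z = Phi0 φ |z| := by
  rcases abs_cases z with ⟨h, _⟩ | ⟨h, _⟩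
  · rw [h]
  · rw [h]
    unfold Phi0
    rw [← integral_neg_eq_self (fun q => φ (-z + q) * φ q) volume]
    refine congrArg _ (funext fun q => ?_)
    rw [show -z + -q = -(z + q) by ring, hsym, hsym]

lemma Phi0_anti_abs (hcont : Continuous φ) (hsupp : HasCompactSupport φ)
    (hnn : ∀ q : ℝ, 0 ≤ φ q) (hsym : ∀ q : ℝ, φ (-q) = φ q)
    (hanti : AntitoneOn φ (Set.Ici 0)) {x y : ℝ} (h : |x| ≤ |y|) :
    Phi0 φ y ≤ Phi0 φ x := by
  rw [Phi0_abs hsym x, Phi0_abs hsym y]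
  exact Phi0_anti hcont hsupp hnn hsym hanti (abs_nonneg x) h

lemma Phi0_zero (hnorm : ∫ q : ℝ, (φ q) ^ 2 = 1) : Phi0 φ 0 = 1 := by
  unfold Phi0
  simp_rw [zero_add, ← pow_two]
  exact hnorm

lemma Phi0_continuous (hcont : Continuous φ) (hsupp : HasCompactSupport φ)
    (hsym : ∀ q : ℝ, φ (-q) = φ q) : Continuous (Phi0 φ) := by
  have hconv : Continuous (convolution φ φ (ContinuousLinearMap.mul ℝ ℝ) volume) :=
    hsupp.continuous_convolution_right _ hcont.locallyIntegrable hcont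
  have heq : Phi0 φ = convolution φ φ (ContinuousLinearMap.mul ℝ ℝ) volume := by
    funext x
    rw [convolution_def]
    unfold Phi0
    rw [← integral_neg_eq_self (fun q => φ (x + q) * φ q) volume]
    refine congrArg _ (funext fun q => ?_)
    simp only [ContinuousLinearMap.mul_apply']
    rw [show x + -q = -(q - x) by ring, hsym, hsym, show q - x = -(x - q) by ring, hsym,
      mul_comm]
  rw [heq]
  exact hconv

lemma PhiEps_eq (hsym : ∀ q : ℝ, φ (-q) = φ q) {ε : ℝ} (hε : 0 < ε) (z : ℝ) :
    PhiEps φ ε z = Phi0 φ (z / ε) := by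
  unfold PhiEps phiEps
  have h1 : ∀ q : ℝ, ((Real.sqrt ε)⁻¹ * φ ((z + q) / ε)) * ((Real.sqrt ε)⁻¹ * φ (q / ε)) =
      ε⁻¹ * ((fun u : ℝ => φ (z / ε + u) * φ u) (q / ε)) := by
    intro q
    have hs : (Real.sqrt ε)⁻¹ * (Real.sqrt ε)⁻¹ = ε⁻¹ := by
      rw [← mul_inv, Real.mul_self_sqrt hε.le]
    simp only []
    rw [← add_div, show ((Real.sqrt ε)⁻¹ * φ ((z + q) / ε)) * ((Real.sqrt ε)⁻¹ * φ (q / ε)) =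
      ((Real.sqrt ε)⁻¹ * (Real.sqrt ε)⁻¹) * (φ ((z + q) / ε) * φ (q / ε)) by ring, hs]
  simp_rw [h1]
  rw [MeasureTheory.integral_const_mul]
  have h2 : (∫ q : ℝ, (fun u : ℝ => φ (z / ε + u) * φ u) (q / ε)) =
      |ε| • ∫ u : ℝ, φ (z / ε + u) * φ u :=
    Measure.integral_comp_div (fun u : ℝ => φ (z / ε + u) * φ u) ε
  rw [h2, abs_of_pos hε, smul_eq_mul, ← mul_assoc, inv_mul_cancel₀ hε.ne', one_mul]
  rfl

end Stmt10Aux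

theorem stmt_10 (φ : ℝ → ℝ) (hsmooth : ContDiff ℝ (⊤ : ℕ∞) φ) (hsupp : HasCompactSupport φ)
    (hnn : ∀ q : ℝ, 0 ≤ φ q) (hsym : ∀ q : ℝ, φ (-q) = φ q)
    (hnorm : ∫ q : ℝ, (φ q) ^ 2 = 1)
    (hmono : MonotoneOn φ (Set.Iic 0)) (hanti : AntitoneOn φ (Set.Ici 0))
    (ν : Measure ℝ) [IsFiniteMeasure ν]
    (hatom : 0 < ν.prod ν {p : ℝ × ℝ | p.1 - p.2 = 0}) :
    ∀ δ : ℝ, 0 < δ → ∀ ε : ℝ, 0 < ε → ε < δ → ∀ z : ℝ,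
      (∫ p : ℝ × ℝ, PhiEps φ ε (p.1 - p.2) ∂ν.prod ν)⁻¹ *
          (∫ p : ℝ × ℝ, PhiEps φ ε (z + p.1 - p.2) ∂ν.prod ν) ≤
        ((ν.prod ν {p : ℝ × ℝ | p.1 - p.2 = 0}).toReal)⁻¹ *
          (∫ p : ℝ × ℝ, PhiEps φ δ (z + p.1 - p.2) ∂ν.prod ν) := by
  intro δ hδ ε hε hεδ z
  have hcont : Continuous φ := hsmooth.continuous
  have hPnn : ∀ x : ℝ, 0 ≤ Stmt10Aux.Phi0 φ x := fun x =>
    integral_nonneg fun q => mul_nonneg (hnn _) (hnn _)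
  have hP1 : ∀ x : ℝ, Stmt10Aux.Phi0 φ x ≤ 1 := by
    intro x
    have h := Stmt10Aux.Phi0_anti_abs hcont hsupp hnn hsym hanti
      (x := 0) (y := x) (by simp [abs_nonneg])
    rwa [Stmt10Aux.Phi0_zero hnorm] at h
  have hPc : Continuous (Stmt10Aux.Phi0 φ) := Stmt10Aux.Phi0_continuous hcont hsupp hsym
  -- rewrite all PhiEps in terms of Phi0
  simp_rw [Stmt10Aux.PhiEps_eq hsym hε, Stmt10Aux.PhiEps_eq hsym hδ]
  -- integrability over the product measure
  have hint : ∀ m : ℝ × ℝ → ℝ, Continuous m →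
      Integrable (fun p : ℝ × ℝ => Stmt10Aux.Phi0 φ (m p)) (ν.prod ν) := by
    intro m hm
    have hc : Continuous fun p : ℝ × ℝ => Stmt10Aux.Phi0 φ (m p) := hPc.comp hm
    refine (integrable_const (1 : ℝ)).mono' hc.aestronglyMeasurable (ae_of_all _ fun p => ?_)
    rw [Real.norm_eq_abs, abs_of_nonneg (hPnn _)]
    exact hP1 _
  have hmε : Continuous fun p : ℝ × ℝ => (p.1 - p.2) / ε :=
    ((continuous_fst.sub continuous_snd).div_const ε)
  have hmzε : Continuous fun p : ℝ × ℝ => (z + p.1 - p.2) / ε :=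
    (((continuous_const.add continuous_fst).sub continuous_snd).div_const ε)
  have hmzδ : Continuous fun p : ℝ × ℝ => (z + p.1 - p.2) / δ :=
    (((continuous_const.add continuous_fst).sub continuous_snd).div_const δ)
  set C : ℝ := (ν.prod ν {p : ℝ × ℝ | p.1 - p.2 = 0}).toReal with hCdef
  have hΔ : MeasurableSet {p : ℝ × ℝ | p.1 - p.2 = 0} :=
    (isClosed_eq (continuous_fst.sub continuous_snd) continuous_const).measurableSet
  have hC : 0 < C := ENNReal.toReal_pos hatom.ne' (measure_ne_top _ _)
  set A : ℝ := ∫ p : ℝ × ℝ, Stmt10Aux.Phi0 φ ((p.1 - p.2) / ε) ∂ν.prod ν with hAdef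
  set B : ℝ := ∫ p : ℝ × ℝ, Stmt10Aux.Phi0 φ ((z + p.1 - p.2) / ε) ∂ν.prod ν with hBdef
  set D : ℝ := ∫ p : ℝ × ℝ, Stmt10Aux.Phi0 φ ((z + p.1 - p.2) / δ) ∂ν.prod ν with hDdef
  have hCA : C ≤ A := by
    have h1 : ∫ p in {p : ℝ × ℝ | p.1 - p.2 = 0},
        Stmt10Aux.Phi0 φ ((p.1 - p.2) / ε) ∂ν.prod ν = C := by
      rw [setIntegral_congr_fun hΔ (g := fun _ => (1 : ℝ)) ?_]
      · rw [setIntegral_const, smul_eq_mul, mul_one]; rfl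
      · intro p hp
        simp only [Set.mem_setOf_eq] at hp
        show Stmt10Aux.Phi0 φ ((p.1 - p.2) / ε) = 1
        rw [hp, zero_div, Stmt10Aux.Phi0_zero hnorm]
    rw [← h1]
    exact setIntegral_le_integral (hint _ hmε) (ae_of_all _ fun p => hPnn _)
  have hA : 0 < A := lt_of_lt_of_le hC hCA
  have hB0 : 0 ≤ B := integral_nonneg fun p => hPnn _
  have hBD : B ≤ D := by
    refine integral_mono (hint _ hmzε) (hint _ hmzδ) fun p => ?_
    refine Stmt10Aux.Phi0_anti_abs hcont hsupp hnn hsym hanti ?_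
    rw [abs_div, abs_div, abs_of_pos hδ, abs_of_pos hε]
    gcongr
  have hinv : A⁻¹ ≤ C⁻¹ := by
    apply inv_anti₀ hC hCA
  calc A⁻¹ * B ≤ C⁻¹ * B := mul_le_mul_of_nonneg_right hinv hB0
    _ ≤ C⁻¹ * D := mul_le_mul_of_nonneg_left hBD (inv_nonneg.2 hC.le)
end
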